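/- The series ∑_{k=0}^∞ k·binom(2k, k)·(1/9)^{k} converges and its sum equals 6·√5/25. -/

import Mathlib

/-!
The Taylor coefficients of `(1 - y) ^ (-3/2)` are `multichoose (3/2) n = (3/2)(5/2)⋯((2n+1)/2) / n!
= (2n + 1) · centralBinom n / 4 ^ n`, so `∑ (2n + 1) · centralBinom n · xⁿ = (1 - 4x) ^ (-3/2)`
for `|x| < 1/4`. Since `(n + 1) · centralBinom (n + 1) = 2 (2n + 1) · centralBinom n`, shifting the
index gives `∑ n · centralBinom n · xⁿ = 2x (1 - 4x) ^ (-3/2)`, and at `x = 1/9` this is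
`(2/9) (9/5) ^ (3/2) = 6√5/25`.
-/

open Nat

theorem ascPochhammer_eval_three_halves {K : Type*} [Field K] [CharZero K] (n : ℕ) :
    (ascPochhammer K n).eval (3 / 2 : K) = (2 * n + 1) * centralBinom n * n ! / 4 ^ n := by
  induction n with
  | zero => simp
  | succ n ih =>
    have h : ((n + 1 : ℕ) : K) * centralBinom (n + 1) = 2 * (2 * n + 1) * centralBinom n := by
      exact_mod_cast succ_mul_centralBinom_succ n
    calc (ascPochhammer K (n + 1)).eval (3 / 2 : K)
        = (2 * n + 1) * centralBinom n * n ! / 4 ^ n * (3 / 2 + n) := by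
          rw [ascPochhammer_succ_eval, ih]
      _ = (2 * n + 3) * (((n + 1 : ℕ) : K) * centralBinom (n + 1)) * n ! / 4 ^ (n + 1) := by
          rw [h, pow_succ]; field_simp; ring
      _ = _ := by rw [factorial_succ]; push_cast; ring

theorem Ring.multichoose_three_halves {K : Type*} [Field K] [CharZero K] (n : ℕ) :
    Ring.multichoose (3 / 2 : K) n = (2 * n + 1) * centralBinom n / 4 ^ n := by
  have h := Ring.factorial_nsmul_multichoose_eq_ascPochhammer (3 / 2 : K) n
  rw [Polynomial.ascPochhammer_smeval_eq_eval, ascPochhammer_eval_three_halves, nsmul_eq_mul] at h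
  apply mul_left_cancel₀ (Nat.cast_ne_zero.mpr (factorial_ne_zero n) : (n ! : K) ≠ 0)
  rw [h]
  ring

theorem hasSum_two_mul_add_one_mul_centralBinom_mul_pow {x : ℝ} (hx : |x| < 1 / 4) :
    HasSum (fun n : ℕ => (2 * n + 1) * centralBinom n * x ^ n)
      (1 / (1 - 4 * x) ^ (3 / 2 : ℝ)) := by
  have hmem : 4 * x ∈ Metric.eball (0 : ℝ) 1 := by
    rw [← ENNReal.coe_one, Metric.eball_coe]
    simp
    linarith
  have h := (Real.one_div_one_sub_rpow_hasFPowerSeriesOnBall_zero (3 / 2)).hasSum hmem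
  rw [zero_add] at h
  refine h.congr_fun fun n => ?_
  rw [FormalMultilinearSeries.ofScalars_apply_eq, ← Ring.multichoose_eq,
    Ring.multichoose_three_halves, smul_eq_mul, mul_pow]
  field_simp

theorem hasSum_mul_centralBinom_mul_pow {x : ℝ} (hx : |x| < 1 / 4) :
    HasSum (fun n : ℕ => n * centralBinom n * x ^ n) (2 * x / (1 - 4 * x) ^ (3 / 2 : ℝ)) := by
  rw [← hasSum_nat_add_iff' 1, Finset.sum_range_one, Nat.cast_zero, zero_mul, zero_mul, sub_zero,
    ← mul_one_div]
  refine ((hasSum_two_mul_add_one_mul_centralBinom_mul_pow hx).mul_left (2 * x)).congr_fun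
    fun n => ?_
  have h : ((n + 1 : ℕ) : ℝ) * centralBinom (n + 1) = 2 * (2 * n + 1) * centralBinom n := by
    exact_mod_cast succ_mul_centralBinom_succ n
  rw [pow_succ, h]
  ring

theorem Real.rpow_three_halves {a : ℝ} (ha : 0 ≤ a) : a ^ (3 / 2 : ℝ) = a * √a := by
  rw [show (3 / 2 : ℝ) = 1 + 1 / 2 by norm_num, Real.rpow_add' ha (by norm_num), Real.rpow_one,
    Real.sqrt_eq_rpow]

/-- `∑ k·binom(2k,k) x^k = 2x/(1−4x)^{3/2}` evaluated at `x = 1/9` gives `6√5/25`. -/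
theorem central_binomial_weighted_sum_at_one_ninth :
    HasSum (fun k : ℕ => (k : ℝ) * ((2 * k).choose k : ℝ) * (1/9) ^ k) (6 * Real.sqrt 5 / 25) := by
  have h := hasSum_mul_centralBinom_mul_pow (x := 1 / 9) (by norm_num [abs_of_pos])
  simp only [centralBinom_eq_two_mul_choose] at h
  convert h using 1
  have hsqrt : √(5 / 9 : ℝ) = √5 / 3 := by
    rw [Real.sqrt_div' _ (by norm_num), show (9 : ℝ) = 3 ^ 2 by norm_num,
      Real.sqrt_sq (by norm_num)]
  have h5 : √5 ^ 2 = 5 := Real.sq_sqrt (by norm_num)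
  rw [show (1 : ℝ) - 4 * (1 / 9) = 5 / 9 by norm_num, Real.rpow_three_halves (by norm_num), hsqrt]
  field_simp
  rw [h5]
  norm_num
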